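/- arXiv:2412.13956 — 4 statements merged into one kernel-verified Lean document; each statement's English description precedes it below -/
import Mathlib

section
/- Let C be a weak coring in a symmetric monoidal closed category 𝒞, with counit ε : C ⟶ 𝟙 and comultiplication Δ : C ⟶ C ⊗ C. Then for every object t of 𝒞, if C ⊗ t is a zero object, then the internal hom (ihom C).obj t is a zero object. -/
/-!
A morphism `f : C ⊗ X ⟶ t` is recovered from `C ◁ f : C ⊗ (C ⊗ X) ⟶ C ⊗ t` by precomposing with the
comultiplication and postcomposing with the counit (the braiding turns the right counit law into a
left one). Hence if `C ⊗ t` is zero, all morphisms `C ⊗ X ⟶ t`, equivalently all morphisms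
`X ⟶ [C, t]`, coincide. In particular `[C, t]` has a single endomorphism, so its identity factors
through the zero object `C ⊗ t`.
-/

open CategoryTheory CategoryTheory.Limits CategoryTheory.MonoidalCategory

namespace CategoryTheory

variable {𝒞 : Type*} [Category 𝒞]

lemma Limits.IsZero.of_subsingleton_end {Z A : 𝒞} (hZ : IsZero Z) [Subsingleton (A ⟶ A)] :
    IsZero A :=
  hZ.of_iso
    { hom := hZ.from_ A
      inv := hZ.to_ A
      hom_inv_id := Subsingleton.elim _ _
      inv_hom_id := hZ.eq_of_src _ _ }

variable [MonoidalCategory 𝒞]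

lemma eq_comul_comp_whiskerLeft_comp_counit {C X t : 𝒞} {ε : C ⟶ 𝟙_ 𝒞} {Δ : C ⟶ C ⊗ C}
    (hΔ : Δ ≫ ε ▷ C ≫ (λ_ C).hom = 𝟙 C) (f : C ⊗ X ⟶ t) :
    f = Δ ▷ X ≫ (α_ C C X).hom ≫ C ◁ f ≫ ε ▷ t ≫ (λ_ t).hom := by
  rw [whisker_exchange_assoc, leftUnitor_naturality, ← associator_naturality_left_assoc,
    leftUnitor_tensor_hom, Category.assoc, Iso.hom_inv_id_assoc, ← comp_whiskerRight_assoc,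
    ← comp_whiskerRight_assoc, Category.assoc, hΔ, id_whiskerRight, Category.id_comp]

lemma subsingleton_tensorLeft_hom_of_isZero {C X t : 𝒞} {ε : C ⟶ 𝟙_ 𝒞} {Δ : C ⟶ C ⊗ C}
    (hΔ : Δ ≫ ε ▷ C ≫ (λ_ C).hom = 𝟙 C) (ht : IsZero (C ⊗ t)) :
    Subsingleton (C ⊗ X ⟶ t) where
  allEq f g := by
    rw [eq_comul_comp_whiskerLeft_comp_counit hΔ f, eq_comul_comp_whiskerLeft_comp_counit hΔ g,
      ht.eq_of_tgt (C ◁ f) (C ◁ g)]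

lemma braiding_hom_comp_whiskerRight_comp_leftUnitor [BraidedCategory 𝒞] {X Y : 𝒞}
    (ε : Y ⟶ 𝟙_ 𝒞) :
    (β_ X Y).hom ≫ ε ▷ X ≫ (λ_ X).hom = X ◁ ε ≫ (ρ_ X).hom := by
  rw [← BraidedCategory.braiding_naturality_right_assoc, braiding_leftUnitor]

lemma MonoidalClosed.isZero_ihom_obj_of_subsingleton [MonoidalClosed 𝒞] {C t : 𝒞}
    (hsub : ∀ X : 𝒞, Subsingleton (C ⊗ X ⟶ t)) (ht : IsZero (C ⊗ t)) :
    IsZero ((ihom C).obj t) :=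
  have : Subsingleton ((ihom C).obj t ⟶ (ihom C).obj t) :=
    MonoidalClosed.uncurry_injective.subsingleton
  ht.of_subsingleton_end

end CategoryTheory

theorem weak_coring_tensor_zero_implies_ihom_zero
    {𝒞 : Type*} [Category 𝒞] [MonoidalCategory 𝒞] [SymmetricCategory 𝒞] [MonoidalClosed 𝒞]
    (C : 𝒞) (ε : C ⟶ 𝟙_ 𝒞) (Δ : C ⟶ C ⊗ C)
    (hΔ : Δ ≫ (C ◁ ε) ≫ (ρ_ C).hom = 𝟙 C)
    (t : 𝒞) (ht : IsZero (C ⊗ t)) :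
    IsZero ((ihom C).obj t) := by
  have hΔ' : (Δ ≫ (β_ C C).hom) ≫ ε ▷ C ≫ (λ_ C).hom = 𝟙 C := by
    rw [Category.assoc, braiding_hom_comp_whiskerRight_comp_leftUnitor, hΔ]
  exact MonoidalClosed.isZero_ihom_obj_of_subsingleton
    (fun _ => subsingleton_tensorLeft_hom_of_isZero hΔ' ht) ht
end

section
/- Let R be a weak ring in a symmetric monoidal closed category 𝒞, with unit η : 𝟙 ⟶ R and multiplication μ : R ⊗ R ⟶ R. Then for every object t of 𝒞, if t ⊗ R is a zero object, then the internal hom (ihom t).obj R is a zero object. -/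
/-!
Since `μ` retracts `R ◁ η`, every map `f : X ⟶ R` factors through `X ⊗ R`, as
`f = (ρ_ X).inv ≫ X ◁ η ≫ f ▷ R ≫ μ`. For `X = t ⊗ Y` the object `X ⊗ R ≅ Y ⊗ (t ⊗ R)` is
initial, because `Y ⊗ -` is a left adjoint; so there is at most one map `t ⊗ Y ⟶ R`, i.e. at
most one map `Y ⟶ (ihom t).obj R`. An object with this property which receives a map from a
zero object is itself zero.
-/

open CategoryTheory CategoryTheory.Limits CategoryTheory.MonoidalCategory

namespace CategoryTheory

variable {𝒞 : Type*} [Category 𝒞]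

lemma isZero_of_forall_subsingleton_hom {Z T : 𝒞} (hZ : IsZero Z)
    (h : ∀ Y : 𝒞, Subsingleton (Y ⟶ T)) : IsZero T :=
  hZ.of_iso <| IsTerminal.uniqueUpToIso
    (IsTerminal.ofUniqueHom (fun Y => hZ.from_ Y ≫ hZ.to_ T) fun _ _ => Subsingleton.elim _ _)
    hZ.isTerminal

variable [MonoidalCategory 𝒞]

lemma eq_rightUnitor_inv_comp_whiskerLeft_comp_whiskerRight_comp {R X : 𝒞} (η : 𝟙_ 𝒞 ⟶ R)
    (μ : R ⊗ R ⟶ R) (hμ : (ρ_ R).inv ≫ (R ◁ η) ≫ μ = 𝟙 R) (f : X ⟶ R) :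
    f = (ρ_ X).inv ≫ X ◁ η ≫ f ▷ R ≫ μ := by
  rw [whisker_exchange_assoc, ← rightUnitor_inv_naturality_assoc, hμ, Category.comp_id]

lemma subsingleton_hom_of_isInitial_tensor {R X : 𝒞} (η : 𝟙_ 𝒞 ⟶ R) (μ : R ⊗ R ⟶ R)
    (hμ : (ρ_ R).inv ≫ (R ◁ η) ≫ μ = 𝟙 R) (hX : IsInitial (X ⊗ R)) : Subsingleton (X ⟶ R) := by
  refine ⟨fun f g => ?_⟩
  rw [eq_rightUnitor_inv_comp_whiskerLeft_comp_whiskerRight_comp η μ hμ f,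
    eq_rightUnitor_inv_comp_whiskerLeft_comp_whiskerRight_comp η μ hμ g, hX.hom_ext (_ ≫ μ)]

noncomputable def isInitialTensorTensorOfIsInitialTensor [BraidedCategory 𝒞] [MonoidalClosed 𝒞]
    {t R : 𝒞} (h : IsInitial (t ⊗ R)) (Y : 𝒞) : IsInitial ((t ⊗ Y) ⊗ R) :=
  (h.isInitialObj (tensorLeft Y)).ofIso (whiskerRightIso (β_ t Y) R ≪≫ α_ Y t R).symm

end CategoryTheory

theorem weak_ring_tensor_zero_implies_ihom_zero
    {𝒞 : Type*} [Category 𝒞] [MonoidalCategory 𝒞] [SymmetricCategory 𝒞] [MonoidalClosed 𝒞]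
    (R : 𝒞) (η : 𝟙_ 𝒞 ⟶ R) (μ : R ⊗ R ⟶ R)
    (hμ : (ρ_ R).inv ≫ (R ◁ η) ≫ μ = 𝟙 R)
    (t : 𝒞) (ht : IsZero (t ⊗ R)) :
    IsZero ((ihom t).obj R) := by
  refine isZero_of_forall_subsingleton_hom ht fun Y => ?_
  exact @Equiv.subsingleton _ _ ((ihom.adjunction t).homEquiv Y R).symm
    (subsingleton_hom_of_isInitial_tensor η μ hμ
      (isInitialTensorTensorOfIsInitialTensor ht.isInitial Y))
end

section
/- Let C be a weak coring in a symmetric monoidal closed category 𝒞, with counit ε : C ⟶ 𝟙 and comultiplication Δ : C ⟶ C ⊗ C. Then for every object t of 𝒞, if the internal hom (ihom C).obj t is a zero object, then C ⊗ t is a zero object. -/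
/-!
Whiskering the counit law by `t` exhibits `C ⊗ t` as a retract of `C ⊗ C ⊗ t`, split by
`C ◁ (ε ▷ t ≫ λ_t)`. That splitting map factors through the evaluation `C ⊗ [C, t] ⟶ t`, so
`C ⊗ t` is even a retract of `C ⊗ C ⊗ [C, t]`. Since `C ⊗ -` is a left adjoint it preserves
zero objects, and a retract of a zero object is zero.
-/

open CategoryTheory CategoryTheory.Limits CategoryTheory.MonoidalCategory

namespace CategoryTheory

lemma Retract.isZero {𝒞 : Type*} [Category 𝒞] {X Y : 𝒞} (h : Retract X Y) (hY : IsZero Y) :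
    IsZero X where
  unique_to Z := ⟨⟨⟨h.i ≫ hY.to_ Z⟩, fun f => by
    rw [← Category.id_comp f, ← h.retract, Category.assoc, hY.eq_to (h.r ≫ f)]; rfl⟩⟩
  unique_from Z := ⟨⟨⟨hY.from_ Z ≫ h.r⟩, fun f => by
    rw [← Category.comp_id f, ← h.retract, ← Category.assoc, hY.eq_from (f ≫ h.i)]; rfl⟩⟩

variable {𝒞 : Type*} [Category 𝒞] [MonoidalCategory 𝒞]

lemma isZero_tensorObj_of_isZero_right (A : 𝒞) [Closed A] {Z : 𝒞} (hZ : IsZero Z) :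
    IsZero (A ⊗ Z) :=
  Retract.isZero ⟨hZ.from_ _, hZ.to_ _, MonoidalClosed.curry_injective (hZ.eq_of_src _ _)⟩ hZ

lemma comul_whiskerRight_counit {C : 𝒞} {ε : C ⟶ 𝟙_ 𝒞} {Δ : C ⟶ C ⊗ C}
    (hΔ : Δ ≫ (C ◁ ε) ≫ (ρ_ C).hom = 𝟙 C) (t : 𝒞) :
    (Δ ▷ t) ≫ (α_ C C t).hom ≫ (C ◁ ((ε ▷ t) ≫ (λ_ t).hom)) = 𝟙 (C ⊗ t) := by
  rw [← id_whiskerRight, ← hΔ]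
  monoidal

def weakCoringTensorRetract {C : 𝒞} [Closed C] {ε : C ⟶ 𝟙_ 𝒞} {Δ : C ⟶ C ⊗ C}
    (hΔ : Δ ≫ (C ◁ ε) ≫ (ρ_ C).hom = 𝟙 C) (t : 𝒞) :
    Retract (C ⊗ t) (C ⊗ C ⊗ (ihom C).obj t) where
  i := (Δ ▷ t) ≫ (α_ C C t).hom ≫ (C ◁ C ◁ MonoidalClosed.curry ((ε ▷ t) ≫ (λ_ t).hom))
  r := C ◁ (ihom.ev C).app t
  retract := by
    rw [Category.assoc, Category.assoc, ← whiskerLeft_comp,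
      MonoidalClosed.whiskerLeft_curry_ihom_ev_app, comul_whiskerRight_counit hΔ]

end CategoryTheory

theorem weak_coring_ihom_zero_implies_tensor_zero_general
    {𝒞 : Type*} [Category 𝒞] [MonoidalCategory 𝒞] [MonoidalClosed 𝒞]
    (C : 𝒞) (ε : C ⟶ 𝟙_ 𝒞) (Δ : C ⟶ C ⊗ C)
    (hΔ : Δ ≫ (C ◁ ε) ≫ (ρ_ C).hom = 𝟙 C)
    (t : 𝒞) (ht : IsZero ((ihom C).obj t)) :
    IsZero (C ⊗ t) :=
  (weakCoringTensorRetract hΔ t).isZero <|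
    isZero_tensorObj_of_isZero_right C (isZero_tensorObj_of_isZero_right C ht)

theorem weak_coring_ihom_zero_implies_tensor_zero
    {𝒞 : Type*} [Category 𝒞] [MonoidalCategory 𝒞] [SymmetricCategory 𝒞] [MonoidalClosed 𝒞]
    (C : 𝒞) (ε : C ⟶ 𝟙_ 𝒞) (Δ : C ⟶ C ⊗ C)
    (hΔ : Δ ≫ (C ◁ ε) ≫ (ρ_ C).hom = 𝟙 C)
    (t : 𝒞) (ht : IsZero ((ihom C).obj t)) :
    IsZero (C ⊗ t) :=
  weak_coring_ihom_zero_implies_tensor_zero_general C ε Δ hΔ t ht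
end

section
/- Let C be a weak coring in a symmetric monoidal closed category 𝒞, with counit ε : C ⟶ 𝟙 and comultiplication Δ : C ⟶ C ⊗ C. Then for every object t of 𝒞, the internal hom (ihom C).obj t is a retract of the internal hom (ihom (C ⊗ C)).obj (t ⊗ C), i.e. there exist morphisms i : (ihom C).obj t ⟶ (ihom (C ⊗ C)).obj (t ⊗ C) and r : (ihom (C ⊗ C)).obj (t ⊗ C) ⟶ (ihom C).obj t with i ≫ r = 𝟙. -/
open CategoryTheory CategoryTheory.MonoidalCategory

/-!
The braiding internalises `f ↦ f ▷ C` to a map `[A, B] ⟶ [A ⊗ C, B ⊗ C]`. If `s : A ⟶ A ⊗ C` is a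
section of `(A ◁ e) ≫ ρ` (as `Δ` is for a weak coring), this map is split by
`g ↦ s ≫ g ≫ (B ◁ e) ≫ ρ`, since `s ≫ (f ▷ C) ≫ (B ◁ e) ≫ ρ = s ≫ (A ◁ e) ≫ ρ ≫ f = f`.
-/

namespace CategoryTheory.MonoidalCategory

variable {𝒞 : Type*} [Category 𝒞] [MonoidalCategory 𝒞] [BraidedCategory 𝒞]

lemma whiskerLeft_braiding_comp_whiskerLeft_counit (A C H : 𝒞) (e : C ⟶ 𝟙_ 𝒞) :
    (α_ A C H).hom ≫ A ◁ (β_ C H).hom ≫ (α_ A H C).inv ≫ (A ⊗ H) ◁ e ≫ (ρ_ (A ⊗ H)).hom =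
      (A ◁ e ≫ (ρ_ A).hom) ▷ H := by
  rw [← associator_inv_naturality_right_assoc, ← whiskerLeft_comp_assoc,
    ← BraidedCategory.braiding_naturality_left, whiskerLeft_comp_assoc,
    ← associator_naturality_middle_assoc, braiding_tensorUnit_left, comp_whiskerRight]
  monoidal

lemma whiskerRight_braiding_whiskerRight_counit_of_section {A C H B : 𝒞} (s : A ⟶ A ⊗ C)
    (e : C ⟶ 𝟙_ 𝒞) (hs : s ≫ A ◁ e ≫ (ρ_ A).hom = 𝟙 A) (g : A ⊗ H ⟶ B) :
    s ▷ H ≫ (α_ A C H).hom ≫ A ◁ (β_ C H).hom ≫ (α_ A H C).inv ≫ g ▷ C ≫ B ◁ e ≫ (ρ_ B).hom =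
      g := by
  rw [← whisker_exchange_assoc, rightUnitor_naturality,
    reassoc_of% whiskerLeft_braiding_comp_whiskerLeft_counit A C H e, ← comp_whiskerRight_assoc,
    hs, id_whiskerRight, Category.id_comp]

end CategoryTheory.MonoidalCategory

namespace CategoryTheory.MonoidalClosed

variable {𝒞 : Type*} [Category 𝒞] [MonoidalCategory 𝒞] [BraidedCategory 𝒞] [MonoidalClosed 𝒞]

def ihomWhiskerRight (A B C : 𝒞) : (ihom A).obj B ⟶ (ihom (A ⊗ C)).obj (B ⊗ C) :=
  curry ((α_ A C _).hom ≫ A ◁ (β_ C _).hom ≫ (α_ A _ C).inv ≫ (ihom.ev A).app B ▷ C)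

def ihomTensorRightRetract {A C : 𝒞} (s : A ⟶ A ⊗ C) (e : C ⟶ 𝟙_ 𝒞)
    (hs : s ≫ A ◁ e ≫ (ρ_ A).hom = 𝟙 A) (B : 𝒞) :
    Retract ((ihom A).obj B) ((ihom (A ⊗ C)).obj (B ⊗ C)) where
  i := ihomWhiskerRight A B C
  r := (pre s).app (B ⊗ C) ≫ (ihom A).map (B ◁ e ≫ (ρ_ B).hom)
  retract := by
    rw [ihomWhiskerRight, curry_pre_app_assoc, ← curry_natural_right, ← curry_uncurry (𝟙 _),
      uncurry_id_eq_ev]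
    congr 1
    simp only [Category.assoc]
    exact whiskerRight_braiding_whiskerRight_counit_of_section s e hs _

end CategoryTheory.MonoidalClosed

theorem weak_coring_ihom_retract
    {𝒞 : Type*} [Category 𝒞] [MonoidalCategory 𝒞] [SymmetricCategory 𝒞] [MonoidalClosed 𝒞]
    (C : 𝒞) (ε : C ⟶ 𝟙_ 𝒞) (Δ : C ⟶ C ⊗ C)
    (hΔ : Δ ≫ (C ◁ ε) ≫ (ρ_ C).hom = 𝟙 C)
    (t : 𝒞) :
    ∃ (i : (ihom C).obj t ⟶ (ihom (C ⊗ C)).obj (t ⊗ C))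
      (r : (ihom (C ⊗ C)).obj (t ⊗ C) ⟶ (ihom C).obj t),
      i ≫ r = 𝟙 ((ihom C).obj t) :=
  let h := MonoidalClosed.ihomTensorRightRetract Δ ε hΔ t
  ⟨h.i, h.r, h.retract⟩
end
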